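/- arXiv:1412.1186 — 3 statements merged into one kernel-verified Lean document; each statement's English description precedes it below -/
import Mathlib

section
/- Fix a real number d and a set I of positive real numbers satisfying the descending chain condition. Then the set of all finite tuples (d_1, …, d_k) (of arbitrary length k) with every entry d_i belonging to I and with sum d_1 + ⋯ + d_k = d is finite. (Equivalently: the set of finite multisets of elements of I whose sum equals d is finite.) -/
/-!
Under the DCC the set `I` is partially well-ordered, so by Higman's lemma the lists with entries
in `I` are partially well-ordered by "pointwise `≤` to a sublist". When all entries are positive,
such an embedding `l₁ ≼ l₂` with `l₁ ≠ l₂` forces `l₁.sum < l₂.sum`; hence the lists with a fixed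
sum form an antichain, which must be finite.
-/

/-- A set of real numbers satisfies the descending chain condition (DCC)
if it contains no infinite strictly decreasing sequence. -/
def SatisfiesDCC (S : Set ℝ) : Prop :=
  ¬ ∃ f : ℕ → ℝ, (∀ n, f n ∈ S) ∧ StrictAnti f

theorem SatisfiesDCC.isPWO {S : Set ℝ} (h : SatisfiesDCC S) : S.IsPWO :=
  Set.IsWF.isPWO <| Set.isWF_iff_no_descending_seq.2 fun f hf hS => h ⟨f, hS, hf⟩

section OrderedCancelAddCommMonoid

variable {α : Type*} [AddCommMonoid α] [PartialOrder α] [IsOrderedCancelAddMonoid α]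

theorem List.SublistForall₂.eq_or_sum_lt {l₁ l₂ : List α}
    (h : List.SublistForall₂ (· ≤ ·) l₁ l₂) (hpos : ∀ x ∈ l₂, 0 < x) :
    l₁ = l₂ ∨ l₁.sum < l₂.sum := by
  induction h with
  | @nil l =>
    rcases eq_or_ne l [] with hnil | hne
    · exact .inl hnil.symm
    · exact .inr (by simpa using List.sum_pos _ hpos hne)
  | @cons a₁ a₂ l₁ l₂ ha _ ih =>
    simp only [List.mem_cons, forall_eq_or_imp] at hpos
    rcases ha.eq_or_lt with rfl | ha <;> rcases ih hpos.2 with rfl | hl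
    · exact .inl rfl
    · exact .inr (by simpa using hl)
    · exact .inr (by simpa using ha)
    · exact .inr (by simpa using add_lt_add ha hl)
  | @cons_right a l₁ l₂ _ ih =>
    simp only [List.mem_cons, forall_eq_or_imp] at hpos
    have hle : l₁.sum ≤ l₂.sum := (ih hpos.2).elim (fun h => h ▸ le_rfl) le_of_lt
    exact .inr (by simpa using add_lt_add_of_lt_of_le hpos.1 hle)

theorem isAntichain_sublistForall₂_setOf_sum_eq (d : α) :
    IsAntichain (List.SublistForall₂ (· ≤ ·)) {l : List α | (∀ x ∈ l, 0 < x) ∧ l.sum = d} := by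
  rintro l₁ ⟨-, hsum₁⟩ l₂ ⟨hpos₂, hsum₂⟩ hne hsub
  rcases hsub.eq_or_sum_lt hpos₂ with heq | hlt
  · exact hne heq
  · exact hlt.ne (hsum₁.trans hsum₂.symm)

end OrderedCancelAddCommMonoid

/-- Lemma 2.4.1 (l_sum): if `I` is a set of positive real numbers satisfying the
DCC and `d` is a fixed real number, then the set of all finite tuples (here
represented as lists) with entries in `I` and sum `d` is finite. -/
theorem sum_tuples_finite (d : ℝ) (I : Set ℝ)
    (hpos : ∀ x ∈ I, 0 < x) (hdcc : SatisfiesDCC I) :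
    {l : List ℝ | (∀ x ∈ l, x ∈ I) ∧ l.sum = d}.Finite := by
  have hPWO : {l : List ℝ | (∀ x ∈ l, x ∈ I) ∧ l.sum = d}.PartiallyWellOrderedOn
      (List.SublistForall₂ (· ≤ ·)) :=
    (Set.PartiallyWellOrderedOn.partiallyWellOrderedOn_sublistForall₂ _ hdcc.isPWO).mono
      fun l hl => hl.1
  have hanti : IsAntichain (List.SublistForall₂ (· ≤ ·))
      {l : List ℝ | (∀ x ∈ l, x ∈ I) ∧ l.sum = d} :=
    (isAntichain_sublistForall₂_setOf_sum_eq d).subset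
      fun l hl => ⟨fun x hx => hpos x (hl.1 x hx), hl.2⟩
  exact hanti.finite_of_partiallyWellOrderedOn hPWO
end

section
/- Let J be a finite set of real numbers, each at most one. Define I to be the set of all real numbers a in the half-open interval (0,1] such that a = 1 + a_1 + ⋯ + a_k − k for some positive integer k and some elements a_1, …, a_k of J (repetitions allowed). Then I is a finite set. -/
/-!
Writing `a = 1 - ∑ (1 - aᵢ)`, the numbers `1 - aᵢ` range over the finite set `1 - J` of
non-negative reals. Every nonzero one is at least some `δ > 0` depending only on `J`,
and `a > 0` forces `∑ (1 - aᵢ) < 1`, so at most `1 / δ` of them are nonzero. Hence `a` is one of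
the finitely many values `1 - ∑_{j < m} dⱼ` with `m ≤ 1 / δ` and `dⱼ ∈ 1 - J`.
-/

open Filter Topology

theorem Set.Finite.exists_pos_forall_le_of_pos {D : Set ℝ} (hD : D.Finite) :
    ∃ δ > 0, ∀ d ∈ D, 0 < d → δ ≤ d := by
  have hsmall : ∀ᶠ δ in 𝓝[>] (0 : ℝ), ∀ d ∈ D, 0 < d → δ ≤ d :=
    (hD.eventually_all).2 fun d _ => eventually_imp_distrib_left.2 fun hd =>
      eventually_nhdsWithin_of_eventually_nhds (eventually_le_nhds hd)
  exact (hsmall.and self_mem_nhdsWithin).exists.imp fun δ h => ⟨h.2, h.1⟩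

theorem exists_embedding_fin_sum_eq_of_ne_zero {ι M : Type*} [Fintype ι] [LinearOrder ι]
    [AddCommMonoid M] (g : ι → M) :
    ∃ (m : ℕ) (e : Fin m ↪ ι), (∀ j, g (e j) ≠ 0) ∧ ∑ j, g (e j) = ∑ i, g i := by
  classical
  set T := Finset.univ.filter (g · ≠ 0)
  refine ⟨T.card, (T.orderEmbOfFin rfl).toEmbedding,
    fun j => (Finset.mem_filter.1 (T.orderEmbOfFin_mem rfl j)).2, ?_⟩
  rw [← Finset.sum_map, Finset.map_orderEmbOfFin_univ, Finset.sum_filter_ne_zero]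

theorem le_floor_div_of_forall_le_of_sum_le {m : ℕ} {g : Fin m → ℝ} {δ C : ℝ} (hδ : 0 < δ)
    (hg : ∀ j, δ ≤ g j) (hC : ∑ j, g j ≤ C) : m ≤ ⌊C / δ⌋₊ := by
  refine Nat.le_floor ((le_div_iff₀ hδ).2 ?_)
  calc (m : ℝ) * δ = Finset.univ.card • δ := by simp
    _ ≤ ∑ j, g j := Finset.card_nsmul_le_sum _ _ _ fun j _ => hg j
    _ ≤ C := hC

theorem Set.Finite.setOf_sum_fin_of_length_le {M : Type*} [AddCommMonoid M] {D : Set M}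
    (hD : D.Finite) (N : ℕ) :
    {s | ∃ m ≤ N, ∃ g : Fin m → M, (∀ i, g i ∈ D) ∧ s = ∑ i, g i}.Finite := by
  refine ((Set.finite_Iic N).biUnion fun m _ =>
    ((Set.Finite.pi fun _ => hD).image fun g : Fin m → M => ∑ i, g i)).subset ?_
  rintro s ⟨m, hm, g, hg, rfl⟩
  exact Set.mem_biUnion hm ⟨g, fun i _ => hg i, rfl⟩

theorem Set.Finite.setOf_sum_fin_le_of_nonneg {D : Set ℝ} (hD : D.Finite) (hD0 : ∀ d ∈ D, 0 ≤ d)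
    (C : ℝ) :
    {s | s ≤ C ∧ ∃ k, ∃ g : Fin k → ℝ, (∀ i, g i ∈ D) ∧ s = ∑ i, g i}.Finite := by
  obtain ⟨δ, hδ, hδD⟩ := hD.exists_pos_forall_le_of_pos
  refine (hD.setOf_sum_fin_of_length_le ⌊C / δ⌋₊).subset ?_
  rintro _ ⟨hC, k, g, hgD, rfl⟩
  obtain ⟨m, e, hne, hsum⟩ := exists_embedding_fin_sum_eq_of_ne_zero g
  have hδg : ∀ j, δ ≤ g (e j) := fun j =>
    hδD _ (hgD _) ((hD0 _ (hgD _)).lt_of_ne' (hne j))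
  exact ⟨m, le_floor_div_of_forall_le_of_sum_le hδ hδg (hsum.trans_le hC), g ∘ e,
    fun j => hgD _, hsum.symm⟩

/-- Lemma 2.4.2 (l_finite): if `J` is a finite set of real numbers, each at most
one, then the set of all `a ∈ (0,1]` of the form `a = 1 + a₁ + ⋯ + a_k − k`
with each `aᵢ ∈ J` is finite. -/
theorem coefficients_finite (J : Set ℝ) (hJfin : J.Finite)
    (hJle : ∀ a ∈ J, a ≤ 1) :
    {a : ℝ | a ∈ Set.Ioc (0 : ℝ) 1 ∧
      ∃ k : ℕ, 0 < k ∧ ∃ f : Fin k → ℝ, (∀ i, f i ∈ J) ∧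
        a = 1 + (∑ i, f i) - k}.Finite := by
  have hnonneg : ∀ d ∈ (1 - ·) '' J, 0 ≤ d := by
    rintro _ ⟨b, hb, rfl⟩
    exact sub_nonneg.2 (hJle b hb)
  refine (((hJfin.image (1 - ·)).setOf_sum_fin_le_of_nonneg hnonneg 1).image (1 - ·)).subset ?_
  rintro _ ⟨⟨ha0, -⟩, k, -, f, hf, rfl⟩
  have hsum : ∑ i, (1 - f i) = k - ∑ i, f i := by simp [Finset.sum_sub_distrib]
  exact ⟨∑ i, (1 - f i), ⟨by linarith, k, fun i => 1 - f i, fun i => ⟨f i, hf i, rfl⟩, rfl⟩,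
    by linarith⟩
end

section
/- Let I be a set of real numbers contained in the interval [0,1] which satisfies the descending chain condition. Then the set { ((r−1)/r) · i : r a positive integer, i ∈ I } also satisfies the descending chain condition. -/
/-! In `ℝ`, the DCC is well-foundedness, which for a linear order is partial well-orderedness: every
sequence has a monotone subsequence. The coefficients `(r - 1) / r` increase with `r`, and along
monotone subsequences of nonnegative coefficients and nonnegative elements of `I` the products are
monotone, so the set of products is partially well-ordered as well. -/

theorem satisfiesDCC_iff_isWF (S : Set ℝ) : SatisfiesDCC S ↔ S.IsWF := by
  simp [SatisfiesDCC, Set.isWF_iff_no_descending_seq, and_comm]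

theorem Set.IsPWO.image2_mul_of_nonneg {α : Type*} [MulZeroClass α] [Preorder α] [PosMulMono α]
    [MulPosMono α] {s t : Set α} (hs : s.IsPWO) (ht : t.IsPWO) (hs₀ : ∀ a ∈ s, 0 ≤ a)
    (ht₀ : ∀ b ∈ t, 0 ≤ b) : (Set.image2 (· * ·) s t).IsPWO := by
  rw [← Set.image_prod]
  refine (hs.prod ht).image_of_monotoneOn ?_
  rintro ⟨a, b⟩ ⟨-, hb⟩ ⟨a', b'⟩ ⟨ha', -⟩ ⟨haa', hbb'⟩
  exact mul_le_mul haa' hbb' (ht₀ b hb) (hs₀ a' ha')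

theorem monotone_natCast_sub_one_div : Monotone fun r : ℕ => ((r : ℝ) - 1) / r := by
  refine monotone_nat_of_le_succ fun r => ?_
  rcases Nat.eq_zero_or_pos r with rfl | hr
  · simp
  · have hr' : (0 : ℝ) < r := by exact_mod_cast hr
    push_cast
    rw [div_le_div_iff₀ hr' (by positivity)]
    nlinarith

/-- If `I ⊆ [0,1]` satisfies the DCC, then the set
`{ ((r−1)/r) · i : r a positive integer, i ∈ I }` also satisfies the DCC. -/
theorem dcc_scaled (I : Set ℝ) (hI : I ⊆ Set.Icc (0 : ℝ) 1)
    (hdcc : SatisfiesDCC I) :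
    SatisfiesDCC {x : ℝ | ∃ r : ℕ, 0 < r ∧ ∃ i ∈ I, x = ((r : ℝ) - 1) / r * i} := by
  have hcoef : (Set.range fun r : ℕ => ((r : ℝ) - 1) / r).IsPWO := by
    rw [← Set.image_univ]
    exact (Set.isPWO_of_wellQuasiOrderedLE _).image_of_monotone monotone_natCast_sub_one_div
  have hcoef₀ : ∀ c ∈ Set.range fun r : ℕ => ((r : ℝ) - 1) / r, 0 ≤ c := by
    rintro _ ⟨r, rfl⟩
    simpa using monotone_natCast_sub_one_div (Nat.zero_le r)
  rw [satisfiesDCC_iff_isWF] at hdcc ⊢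
  refine (hcoef.image2_mul_of_nonneg hdcc.isPWO hcoef₀ fun i hi => (hI hi).1).isWF.mono ?_
  rintro x ⟨r, -, i, hi, rfl⟩
  exact ⟨_, ⟨r, rfl⟩, i, hi, rfl⟩
end
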